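/- arXiv:2008.05999 — 3 statements merged into one kernel-verified Lean document; each statement's English description precedes it below -/
import Mathlib

section
/- Let p > 1 be real, let H be a real inner product space, let ξ, η ∈ H, and let a, b ∈ ℝ with b ≠ 0. Then ‖ξ‖^p − p (|a|^{p−2}a/(|b|^{p−2}b)) ‖η‖^{p−2} ⟨η, ξ⟩ + (p−1) (|a|^p/|b|^p) ‖η‖^p ≥ 0. -/
open scoped RealInnerProductSpace

/-!
Put `s = |a| / |b|`, so that the coefficient `c = |a|^{p-2} a / (|b|^{p-2} b)` has `|c| = s^{p-1}`.
By Cauchy–Schwarz the middle term is at most `p ‖ξ‖ (s ‖η‖)^{p-1}`, and Young's inequality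
`p X Y^{p-1} ≤ X^p + (p-1) Y^p` with `X = ‖ξ‖`, `Y = s ‖η‖` absorbs it into the two outer terms.
-/

namespace Real

lemma rpow_sub_two_mul_self {p t : ℝ} (hp : p ≠ 1) (ht : 0 ≤ t) :
    t ^ (p - 2) * t = t ^ (p - 1) := by
  rw [← rpow_add_one' ht (by intro h; apply hp; linarith)]
  ring_nf

lemma abs_abs_rpow_sub_two_mul_self {p : ℝ} (hp : p ≠ 1) (x : ℝ) :
    |(|x| ^ (p - 2) * x)| = |x| ^ (p - 1) := by
  rw [abs_mul, abs_of_nonneg (rpow_nonneg (abs_nonneg x) _),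
    rpow_sub_two_mul_self hp (abs_nonneg x)]

lemma mul_mul_rpow_sub_one_le {p X Y : ℝ} (hp : 1 < p) (hX : 0 ≤ X) (hY : 0 ≤ Y) :
    p * (X * Y ^ (p - 1)) ≤ X ^ p + (p - 1) * Y ^ p := by
  have hpq : p.HolderConjugate (p / (p - 1)) := HolderConjugate.conjExponent hp
  have young := young_inequality_of_nonneg hX (rpow_nonneg hY (p - 1)) hpq
  have hYp : (Y ^ (p - 1)) ^ (p / (p - 1)) = Y ^ p := by
    rw [← rpow_mul hY]
    congr 1
    field_simp [(sub_pos.mpr hp).ne']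
  rw [hYp] at young
  calc p * (X * Y ^ (p - 1)) ≤ p * (X ^ p / p + Y ^ p / (p / (p - 1))) := by gcongr
    _ = X ^ p + (p - 1) * Y ^ p := by field_simp

end Real

open Real

lemma mul_rpow_sub_two_mul_inner_le {H : Type*} [NormedAddCommGroup H] [InnerProductSpace ℝ H]
    {p c s : ℝ} (hp : p ≠ 1) (hs : 0 ≤ s) (hc : |c| = s ^ (p - 1)) (ξ η : H) :
    c * (‖η‖ ^ (p - 2) * ⟪η, ξ⟫) ≤ ‖ξ‖ * (s * ‖η‖) ^ (p - 1) :=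
  calc c * (‖η‖ ^ (p - 2) * ⟪η, ξ⟫)
      ≤ |c| * (‖η‖ ^ (p - 2) * |⟪η, ξ⟫|) := by
        rw [← abs_of_nonneg (rpow_nonneg (norm_nonneg η) (p - 2)), ← abs_mul, ← abs_mul,
          abs_of_nonneg (rpow_nonneg (norm_nonneg η) (p - 2))]
        exact le_abs_self _
    _ ≤ |c| * (‖η‖ ^ (p - 2) * (‖η‖ * ‖ξ‖)) := by gcongr; exact abs_real_inner_le_norm η ξ
    _ = ‖ξ‖ * (s * ‖η‖) ^ (p - 1) := by
        rw [hc, mul_rpow hs (norm_nonneg η), ← rpow_sub_two_mul_self hp (norm_nonneg η)]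
        ring

theorem picone_pointwise_inequality_general {H : Type*} [NormedAddCommGroup H]
    [InnerProductSpace ℝ H] (p : ℝ) (hp : 1 < p) (ξ η : H) (a b : ℝ) :
    0 ≤ ‖ξ‖ ^ p
        - p * ((|a| ^ (p - 2) * a) / (|b| ^ (p - 2) * b)) * (‖η‖ ^ (p - 2) * ⟪η, ξ⟫)
        + (p - 1) * (|a| ^ p / |b| ^ p) * ‖η‖ ^ p := by
  set s := |a| / |b|
  have hs : 0 ≤ s := by positivity
  have hc : |(|a| ^ (p - 2) * a) / (|b| ^ (p - 2) * b)| = s ^ (p - 1) := by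
    rw [abs_div, abs_abs_rpow_sub_two_mul_self hp.ne', abs_abs_rpow_sub_two_mul_self hp.ne',
      div_rpow (abs_nonneg a) (abs_nonneg b)]
  have hmiddle := mul_le_mul_of_nonneg_left
    (mul_rpow_sub_two_mul_inner_le hp.ne' hs hc ξ η) (by linarith : (0 : ℝ) ≤ p)
  have hyoung := mul_mul_rpow_sub_one_le hp (norm_nonneg ξ) (mul_nonneg hs (norm_nonneg η))
  have hYp : (s * ‖η‖) ^ p = |a| ^ p / |b| ^ p * ‖η‖ ^ p := by
    rw [mul_rpow hs (norm_nonneg η), div_rpow (abs_nonneg a) (abs_nonneg b)]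
  rw [hYp] at hyoung
  linarith

/-- **Pointwise (algebraic) Picone inequality.**
For a real inner product space `H`, `p > 1`, vectors `ξ η : H` and reals `a b` with `b ≠ 0`,
`‖ξ‖^p − p (|a|^{p−2}a/(|b|^{p−2}b)) ‖η‖^{p−2} ⟨η, ξ⟩ + (p−1)(|a|^p/|b|^p) ‖η‖^p ≥ 0`.
(Real exponents are interpreted via `Real.rpow`.) -/
theorem picone_pointwise_inequality {H : Type*} [NormedAddCommGroup H]
    [InnerProductSpace ℝ H] (p : ℝ) (hp : 1 < p) (ξ η : H) (a b : ℝ) (hb : b ≠ 0) :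
    0 ≤ ‖ξ‖ ^ p
        - p * ((|a| ^ (p - 2) * a) / (|b| ^ (p - 2) * b)) * (‖η‖ ^ (p - 2) * ⟪η, ξ⟫)
        + (p - 1) * (|a| ^ p / |b| ^ p) * ‖η‖ ^ p :=
  picone_pointwise_inequality_general p hp ξ η a b
end

section
/- Let Ω ⊆ ℝ^n be an open set, let X_1, …, X_N : Ω → ℝ^n be continuous vector fields, and let p > 1. Let u, v : Ω → ℝ be differentiable with v(x) ≠ 0 for all x ∈ Ω. Then L(u,v)(x) = R(u,v)(x) for every x ∈ Ω. -/
/-!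
By the chain rule, `∇_X (|u|^p / (|v|^{p-2} v)) = a ∇_X u - b ∇_X v` with
`a = p |u|^{p-2} u / (|v|^{p-2} v)` and `b = (p - 1) |u|^p / |v|^p`. Pairing this with
`|∇_X v|^{p-2} ∇_X v` and using `|∇_X v|^{p-2} |∇_X v|^2 = |∇_X v|^p` turns `R(u,v)` into `L(u,v)`.
-/

open scoped RealInnerProductSpace

/-- The horizontal gradient `∇_X u (x) = (⟨X 1 x, ∇u x⟩, …, ⟨X N x, ∇u x⟩) ∈ ℝ^N`
associated with the family of vector fields `X : Fin N → ℝ^n → ℝ^n`. -/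
noncomputable def gradX {n N : ℕ}
    (X : Fin N → EuclideanSpace ℝ (Fin n) → EuclideanSpace ℝ (Fin n))
    (u : EuclideanSpace ℝ (Fin n) → ℝ) (x : EuclideanSpace ℝ (Fin n)) :
    EuclideanSpace ℝ (Fin N) :=
  (WithLp.equiv 2 (Fin N → ℝ)).symm fun k => ⟪X k x, gradient u x⟫

/-- `L(u,v)(x)` from Picone's identity for general vector fields.
Real exponents are interpreted via `Real.rpow`, so the term containing the factor
`‖∇_X v‖^{p−2}` is `0` where `∇_X v = 0`. -/
noncomputable def piconeL {n N : ℕ} (p : ℝ)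
    (X : Fin N → EuclideanSpace ℝ (Fin n) → EuclideanSpace ℝ (Fin n))
    (u v : EuclideanSpace ℝ (Fin n) → ℝ) (x : EuclideanSpace ℝ (Fin n)) : ℝ :=
  ‖gradX X u x‖ ^ p
    - p * ((|u x| ^ (p - 2) * u x) / (|v x| ^ (p - 2) * v x)) *
        (‖gradX X v x‖ ^ (p - 2) * ⟪gradX X v x, gradX X u x⟫)
    + (p - 1) * (|u x| ^ p / |v x| ^ p) * ‖gradX X v x‖ ^ p

/-- `R(u,v)(x)` from Picone's identity for general vector fields. -/
noncomputable def piconeR {n N : ℕ} (p : ℝ)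
    (X : Fin N → EuclideanSpace ℝ (Fin n) → EuclideanSpace ℝ (Fin n))
    (u v : EuclideanSpace ℝ (Fin n) → ℝ) (x : EuclideanSpace ℝ (Fin n)) : ℝ :=
  ‖gradX X u x‖ ^ p
    - ‖gradX X v x‖ ^ (p - 2) *
        ⟪gradX X v x, gradX X (fun y => |u y| ^ p / (|v y| ^ (p - 2) * v y)) x⟫

theorem Real.rpow_sub_two_mul_sq {r : ℝ} (hr : 0 ≤ r) {p : ℝ} (hp : p ≠ 0) :
    r ^ (p - 2) * r ^ 2 = r ^ p := by
  rw [← Real.rpow_two, ← Real.rpow_add' hr (by simpa using hp), sub_add_cancel]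

theorem hasDerivAt_inv_abs_rpow_sub_two_mul_self {p t : ℝ} (hp : p ≠ 0) (ht : t ≠ 0) :
    HasDerivAt (fun s : ℝ => (|s| ^ (p - 2) * s)⁻¹) (-(p - 1) / |t| ^ p) t := by
  have ht' : 0 < |t| := abs_pos.2 ht
  have hpow : HasDerivAt (fun s : ℝ => |s| ^ (p - 2))
      (SignType.sign t * (p - 2) * |t| ^ (p - 2 - 1)) t :=
    (hasDerivAt_abs ht).rpow_const (Or.inl ht'.ne')
  refine ((hpow.fun_mul (hasDerivAt_id' t)).fun_inv
    (mul_ne_zero (Real.rpow_pos_of_pos ht' _).ne' ht)).congr_deriv ?_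
  have hsign : (SignType.sign t : ℝ) * t = |t| := by
    rcases ht.lt_or_gt with h | h <;> simp [h, abs_of_neg, abs_of_pos]
  have hsub : |t| ^ (p - 2 - 1) * |t| = |t| ^ (p - 2) := by
    rw [Real.rpow_sub_one ht'.ne', div_mul_cancel₀ _ ht'.ne']
  have hsq : t ^ 2 = |t| ^ 2 := (sq_abs t).symm
  have hpow_sq := Real.rpow_sub_two_mul_sq ht'.le hp
  have hp_ne : |t| ^ p ≠ 0 := (Real.rpow_pos_of_pos ht' _).ne'
  have hp2_ne : |t| ^ (p - 2) ≠ 0 := (Real.rpow_pos_of_pos ht' _).ne'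
  rw [div_eq_div_iff (pow_ne_zero 2 (mul_ne_zero hp2_ne ht)) hp_ne]
  linear_combination (-(p - 2) * |t| ^ (p - 2 - 1) * |t| ^ p) * hsign
    - (p - 2) * |t| ^ p * hsub + (p - 1) * (|t| ^ (p - 2)) ^ 2 * hsq
    + (p - 1) * |t| ^ (p - 2) * hpow_sq

theorem HasFDerivAt.abs_rpow_div_abs_rpow_sub_two_mul {E : Type*} [NormedAddCommGroup E]
    [NormedSpace ℝ E] {u v : E → ℝ} {u' v' : E →L[ℝ] ℝ} {x : E} {p : ℝ} (hp : 1 < p)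
    (hu : HasFDerivAt u u' x) (hv : HasFDerivAt v v' x) (hv0 : v x ≠ 0) :
    HasFDerivAt (fun y => |u y| ^ p / (|v y| ^ (p - 2) * v y))
      ((p * ((|u x| ^ (p - 2) * u x) / (|v x| ^ (p - 2) * v x))) • u'
        - ((p - 1) * (|u x| ^ p / |v x| ^ p)) • v') x := by
  have hnum := (hasDerivAt_abs_rpow (u x) hp).comp_hasFDerivAt x hu
  have hden := (hasDerivAt_inv_abs_rpow_sub_two_mul_self (by positivity) hv0).comp_hasFDerivAt x hv
  simp only [div_eq_mul_inv]
  refine (hnum.mul hden).congr_fderiv ?_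
  match_scalars <;> simp only [Function.comp_apply] <;> ring

theorem gradient_eq_smul_sub_smul_of_hasFDerivAt {F : Type*} [NormedAddCommGroup F]
    [InnerProductSpace ℝ F] [CompleteSpace F] {w u v : F → ℝ} {x : F} {a b : ℝ}
    (hw : HasFDerivAt w (a • fderiv ℝ u x - b • fderiv ℝ v x) x) :
    gradient w x = a • gradient u x - b • gradient v x := by
  simp [gradient, hw.fderiv]

theorem gradX_eq_smul_sub_smul_of_gradient_eq {n N : ℕ}
    {X : Fin N → EuclideanSpace ℝ (Fin n) → EuclideanSpace ℝ (Fin n)}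
    {w u v : EuclideanSpace ℝ (Fin n) → ℝ} {x : EuclideanSpace ℝ (Fin n)} {a b : ℝ}
    (h : gradient w x = a • gradient u x - b • gradient v x) :
    gradX X w x = a • gradX X u x - b • gradX X v x := by
  ext k
  simp [gradX, h, inner_sub_right, real_inner_smul_right]

theorem picone_identity_general {n N : ℕ} (p : ℝ) (hp : 1 < p)
    (Ω : Set (EuclideanSpace ℝ (Fin n)))
    (X : Fin N → EuclideanSpace ℝ (Fin n) → EuclideanSpace ℝ (Fin n))
    (u v : EuclideanSpace ℝ (Fin n) → ℝ)
    (hu : ∀ x ∈ Ω, DifferentiableAt ℝ u x)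
    (hv : ∀ x ∈ Ω, DifferentiableAt ℝ v x)
    (hv0 : ∀ x ∈ Ω, v x ≠ 0) :
    ∀ x ∈ Ω, piconeL p X u v x = piconeR p X u v x := by
  intro x hx
  set a := p * ((|u x| ^ (p - 2) * u x) / (|v x| ^ (p - 2) * v x))
  set b := (p - 1) * (|u x| ^ p / |v x| ^ p)
  have hgradX : gradX X (fun y => |u y| ^ p / (|v y| ^ (p - 2) * v y)) x
      = a • gradX X u x - b • gradX X v x :=
    gradX_eq_smul_sub_smul_of_gradient_eq <| gradient_eq_smul_sub_smul_of_hasFDerivAt <|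
      (hu x hx).hasFDerivAt.abs_rpow_div_abs_rpow_sub_two_mul hp (hv x hx).hasFDerivAt (hv0 x hx)
  have hnorm := Real.rpow_sub_two_mul_sq (norm_nonneg (gradX X v x)) (by positivity : p ≠ 0)
  rw [piconeL, piconeR, hgradX, inner_sub_right, real_inner_smul_right, real_inner_smul_right,
    real_inner_self_eq_norm_sq]
  linear_combination -b * hnorm

/-- **Picone identity for general vector fields:** `L(u,v) = R(u,v)` on `Ω`. -/
theorem picone_identity {n N : ℕ} (p : ℝ) (hp : 1 < p)
    (Ω : Set (EuclideanSpace ℝ (Fin n))) (hΩ : IsOpen Ω)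
    (X : Fin N → EuclideanSpace ℝ (Fin n) → EuclideanSpace ℝ (Fin n))
    (hX : ∀ k, ContinuousOn (X k) Ω)
    (u v : EuclideanSpace ℝ (Fin n) → ℝ)
    (hu : ∀ x ∈ Ω, DifferentiableAt ℝ u x)
    (hv : ∀ x ∈ Ω, DifferentiableAt ℝ v x)
    (hv0 : ∀ x ∈ Ω, v x ≠ 0) :
    ∀ x ∈ Ω, piconeL p X u v x = piconeR p X u v x :=
  picone_identity_general p hp Ω X u v hu hv hv0
end

section
/- Let Ω ⊆ ℝ^n be an open set, let X_1, …, X_N : Ω → ℝ^n be continuous vector fields, let 1 < p < ∞ and λ ∈ ℝ. Assume there exists v ∈ C^1(Ω) with v(x) > 0 for all x ∈ Ω which is a weak sup-solution of 𝓛_p v = λ|v|^{p−2}v in Ω. Then ∫_Ω |∇_X u|^p dx ≥ λ ∫_Ω |u|^p dx for every u ∈ C_c^∞(Ω). -/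
open scoped RealInnerProductSpace

open MeasureTheory

/-- A strictly positive `C¹` weak sup-solution of `𝓛_p v = λ |v|^{p−2} v` in `Ω`:
`∫_Ω ‖∇_X v‖^{p−2} ⟨∇_X v, ∇_X φ⟩ ≥ λ ∫_Ω |v|^{p−2} v φ` for every nonnegative
compactly supported `C¹` function `φ` with support in `Ω`. -/
def IsWeakSupSolution {n N : ℕ} (p lam : ℝ)
    (X : Fin N → EuclideanSpace ℝ (Fin n) → EuclideanSpace ℝ (Fin n))
    (Ω : Set (EuclideanSpace ℝ (Fin n))) (v : EuclideanSpace ℝ (Fin n) → ℝ) : Prop :=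
  ∀ φ : EuclideanSpace ℝ (Fin n) → ℝ, ContDiff ℝ 1 φ → HasCompactSupport φ →
    tsupport φ ⊆ Ω → (∀ x, 0 ≤ φ x) →
    lam * ∫ x in Ω, |v x| ^ (p - 2) * v x * φ x ≤
      ∫ x in Ω, ‖gradX X v x‖ ^ (p - 2) * ⟪gradX X v x, gradX X φ x⟫

lemma gradX_apply {n N : ℕ}
    (X : Fin N → EuclideanSpace ℝ (Fin n) → EuclideanSpace ℝ (Fin n))
    (u : EuclideanSpace ℝ (Fin n) → ℝ) (x : EuclideanSpace ℝ (Fin n)) (k : Fin N) :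
    gradX X u x k = fderiv ℝ u x (X k x) := by
  simp only [gradX, WithLp.equiv_symm_apply, WithLp.ofLp_toLp]
  rw [real_inner_comm, gradient, InnerProductSpace.toDual_symm_apply]

lemma young_aux {p : ℝ} (hp : 1 < p) {b c : ℝ} (hb : 0 ≤ b) (hc : 0 ≤ c) :
    p * b ^ (p - 1) * c ≤ c ^ p + (p - 1) * b ^ p := by
  have hp0 : (0:ℝ) < p := by linarith
  have hp1 : p - 1 ≠ 0 := by intro h; linarith [h]
  have hq : Real.HolderConjugate p (p / (p - 1)) := (Real.holderConjugate_iff_eq_conjExponent hp).2 rfl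
  have h := Real.young_inequality_of_nonneg hc (Real.rpow_nonneg hb (p - 1)) hq
  have hbq : (b ^ (p - 1)) ^ (p / (p - 1)) = b ^ p := by
    rw [← Real.rpow_mul hb]
    congr 1
    field_simp
  rw [hbq] at h
  calc p * b ^ (p - 1) * c = p * (c * b ^ (p - 1)) := by ring
    _ ≤ p * (c ^ p / p + b ^ p / (p / (p - 1))) :=
        mul_le_mul_of_nonneg_left h (le_of_lt hp0)
    _ = c ^ p + (p - 1) * b ^ p := by field_simp

lemma key_scalar {p : ℝ} (hp : 1 < p) {α β s t I : ℝ} (hα : 0 ≤ α) (hβ : 0 ≤ β)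
    (hs : 0 < s) (hI : |I| ≤ α * β) :
    α ^ (p - 2) * ((1 - p) * |t| ^ p * s ^ (-p) * (α * α)
      + p * |t| ^ (p - 2) * t * s ^ (1 - p) * I) ≤ β ^ p := by
  have hp0 : (0:ℝ) < p := by linarith
  rcases eq_or_lt_of_le hα with hα0 | hα
  · subst hα0
    have hI0 : I = 0 := by
      rw [mul_comm, mul_zero] at hI
      exact abs_nonpos_iff.mp hI
    simp only [hI0, mul_zero, zero_mul, add_zero, mul_zero]
    simpa using Real.rpow_nonneg hβ p
  rcases eq_or_ne t 0 with rfl | ht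
  · simp only [abs_zero, Real.zero_rpow (ne_of_gt hp0), mul_zero, zero_mul, add_zero]
    simpa using Real.rpow_nonneg hβ p
  set T := |t| with hTdef
  have hT0 : 0 < T := abs_pos.mpr ht
  have e1 : α ^ (p - 2) * α = α ^ (p - 1) := by
    rw [show p - 1 = (p - 2) + 1 by ring, Real.rpow_add_one (ne_of_gt hα)]
  have e2 : α ^ (p - 1) * α = α ^ p := by
    rw [show (p : ℝ) = (p - 1) + 1 by ring, Real.rpow_add_one (ne_of_gt hα)]
    ring_nf
  have eT : T ^ (p - 2) * T = T ^ (p - 1) := by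
    rw [show p - 1 = (p - 2) + 1 by ring, Real.rpow_add_one (ne_of_gt hT0)]
  set b := T * α / s with hbdef
  have hb0 : 0 ≤ b := by positivity
  have hb_p : b ^ p = T ^ p * α ^ p * s ^ (-p) := by
    rw [hbdef, Real.div_rpow (by positivity) hs.le, Real.mul_rpow hT0.le hα.le,
      Real.rpow_neg hs.le, div_eq_mul_inv]
  have hb_p1 : b ^ (p - 1) = T ^ (p - 1) * α ^ (p - 1) * s ^ (1 - p) := by
    rw [hbdef, Real.div_rpow (by positivity) hs.le, Real.mul_rpow hT0.le hα.le,
      show (1 - p : ℝ) = -(p - 1) by ring, Real.rpow_neg hs.le, div_eq_mul_inv]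
  have h2 : p * T ^ (p - 2) * t * s ^ (1 - p) * I ≤ p * T ^ (p - 1) * s ^ (1 - p) * (α * β) := by
    have habs : p * T ^ (p - 2) * t * s ^ (1 - p) * I
        ≤ |p * T ^ (p - 2) * t * s ^ (1 - p) * I| := le_abs_self _
    have heq : |p * T ^ (p - 2) * t * s ^ (1 - p) * I|
        = p * T ^ (p - 1) * s ^ (1 - p) * |I| := by
      rw [abs_mul, abs_mul, abs_mul, abs_mul, abs_of_pos hp0,
        abs_of_nonneg (Real.rpow_nonneg (abs_nonneg t) (p - 2)),
        abs_of_nonneg (Real.rpow_nonneg hs.le (1 - p)), ← hTdef, ← eT]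
      ring
    have hle : p * T ^ (p - 1) * s ^ (1 - p) * |I| ≤ p * T ^ (p - 1) * s ^ (1 - p) * (α * β) :=
      mul_le_mul_of_nonneg_left hI (by positivity)
    linarith
  have hmul := mul_le_mul_of_nonneg_left h2 (Real.rpow_nonneg hα.le (p - 2))
  have hr : α ^ (p - 2) * (p * T ^ (p - 1) * s ^ (1 - p) * (α * β)) = p * b ^ (p - 1) * β := by
    rw [hb_p1]
    calc α ^ (p - 2) * (p * T ^ (p - 1) * s ^ (1 - p) * (α * β))
        = p * T ^ (p - 1) * s ^ (1 - p) * (α ^ (p - 2) * α) * β := by ring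
      _ = p * T ^ (p - 1) * s ^ (1 - p) * α ^ (p - 1) * β := by rw [e1]
      _ = p * (T ^ (p - 1) * α ^ (p - 1) * s ^ (1 - p)) * β := by ring
  have hx : α ^ (p - 2) * (α * α) = α ^ p := by
    calc α ^ (p - 2) * (α * α) = α ^ (p - 2) * α * α := by ring
      _ = α ^ (p - 1) * α := by rw [e1]
      _ = α ^ p := e2
  have hsplit : α ^ (p - 2) * ((1 - p) * T ^ p * s ^ (-p) * (α * α)
      + p * T ^ (p - 2) * t * s ^ (1 - p) * I)
      = (1 - p) * T ^ p * s ^ (-p) * (α ^ (p - 2) * (α * α))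
        + α ^ (p - 2) * (p * T ^ (p - 2) * t * s ^ (1 - p) * I) := by ring
  have hyoung := young_aux hp hb0 hβ
  rw [hsplit, hx]
  have hfirst : (1 - p) * T ^ p * s ^ (-p) * α ^ p = (1 - p) * b ^ p := by
    rw [hb_p]; ring
  linarith [hmul, hr ▸ hmul]

/-- **Lemma 2.1:** if there is a strictly positive weak sup-solution of
`𝓛_p v = λ |v|^{p−2} v` in `Ω`, then `∫_Ω ‖∇_X u‖^p ≥ λ ∫_Ω |u|^p` for every
`u ∈ C_c^∞(Ω)`. -/
theorem principal_frequency_lower_bound {n N : ℕ} (p lam : ℝ) (hp : 1 < p)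
    (Ω : Set (EuclideanSpace ℝ (Fin n))) (hΩ : IsOpen Ω)
    (X : Fin N → EuclideanSpace ℝ (Fin n) → EuclideanSpace ℝ (Fin n))
    (hX : ∀ k, ContinuousOn (X k) Ω)
    (v : EuclideanSpace ℝ (Fin n) → ℝ)
    (hv : ContDiffOn ℝ 1 v Ω) (hvpos : ∀ x ∈ Ω, 0 < v x)
    (hsup : IsWeakSupSolution p lam X Ω v) :
    ∀ u : EuclideanSpace ℝ (Fin n) → ℝ, ContDiff ℝ (⊤ : ℕ∞) u → HasCompactSupport u →
      tsupport u ⊆ Ω →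
      lam * ∫ x in Ω, |u x| ^ p ≤ ∫ x in Ω, ‖gradX X u x‖ ^ p := by
  intro u hu hucomp husupp
  have hp0 : (0:ℝ) < p := by linarith
  have hpne : p ≠ 0 := ne_of_gt hp0
  set ψ : EuclideanSpace ℝ (Fin n) → ℝ := fun y => |u y| ^ p * (v y) ^ (1 - p) with hψdef
  set φ : EuclideanSpace ℝ (Fin n) → ℝ := Ω.indicator ψ with hφdef
  -- |u|^p is C¹
  have habs : ContDiff ℝ 1 (fun y => |u y| ^ p) := by
    have h := (hu.of_le (by simp) : ContDiff ℝ 1 u).norm_rpow hp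
    simpa [Real.norm_eq_abs] using h
  -- support facts
  have hψ0 : ∀ y, u y = 0 → ψ y = 0 := by
    intro y hy
    simp [hψdef, hy, Real.zero_rpow hpne]
  have hsupp_φ : Function.support φ ⊆ Function.support u := by
    intro x hx
    by_contra hux
    have hux0 : u x = 0 := Function.notMem_support.mp hux
    apply hx
    by_cases hxΩ : x ∈ Ω
    · rw [hφdef, Set.indicator_of_mem hxΩ, hψ0 x hux0]
    · rw [hφdef, Set.indicator_of_notMem hxΩ]
  have hφcomp : HasCompactSupport φ := hucomp.mono hsupp_φ
  have hφΩ : tsupport φ ⊆ Ω := (closure_mono hsupp_φ).trans husupp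
  have hφnn : ∀ x, 0 ≤ φ x := fun x =>
    Set.indicator_nonneg (fun y hy =>
      mul_nonneg (Real.rpow_nonneg (abs_nonneg _) p)
        (Real.rpow_nonneg (hvpos y hy).le _)) x
  have hφeq : ∀ x ∈ Ω, φ =ᶠ[nhds x] ψ := fun x hx =>
    Filter.eventuallyEq_of_mem (hΩ.mem_nhds hx) (fun y hy => Set.indicator_of_mem hy ψ)
  -- C¹ regularity of φ
  have hφC1 : ContDiff ℝ 1 φ := by
    rw [contDiff_iff_contDiffAt]
    intro x
    by_cases hx : x ∈ Ω
    · have hψx : ContDiffAt ℝ 1 ψ x :=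
        habs.contDiffAt.mul
          ((hv.contDiffAt (hΩ.mem_nhds hx)).rpow_const_of_ne (ne_of_gt (hvpos x hx)))
      exact hψx.congr_of_eventuallyEq (hφeq x hx)
    · have hx' : x ∉ tsupport u := fun h => hx (husupp h)
      have h0 : φ =ᶠ[nhds x] fun _ => (0:ℝ) := by
        filter_upwards [(isClosed_tsupport u).isOpen_compl.mem_nhds hx'] with y hy
        have huy : u y = 0 := image_eq_zero_of_notMem_tsupport hy
        by_cases hyΩ : y ∈ Ω
        · rw [hφdef, Set.indicator_of_mem hyΩ, hψ0 y huy]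
        · rw [hφdef, Set.indicator_of_notMem hyΩ]
      exact contDiffAt_const.congr_of_eventuallyEq h0
  -- the weak sup-solution inequality applied to φ
  have key := hsup φ hφC1 hφcomp hφΩ hφnn
  -- LHS integrand simplification
  have hLHS : ∫ x in Ω, |v x| ^ (p - 2) * v x * φ x = ∫ x in Ω, |u x| ^ p := by
    apply setIntegral_congr_fun hΩ.measurableSet
    intro x hx
    have hvx : 0 < v x := hvpos x hx
    have hone : (v x) ^ (p - 2) * v x * (v x) ^ (1 - p) = 1 := by
      rw [← Real.rpow_add_one (ne_of_gt hvx) (p - 2), ← Real.rpow_add hvx,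
        show p - 2 + 1 + (1 - p) = 0 by ring, Real.rpow_zero]
    calc |v x| ^ (p - 2) * v x * φ x
        = (v x) ^ (p - 2) * v x * (|u x| ^ p * (v x) ^ (1 - p)) := by
          rw [hφdef, Set.indicator_of_mem hx, abs_of_pos hvx]
      _ = |u x| ^ p * ((v x) ^ (p - 2) * v x * (v x) ^ (1 - p)) := by ring
      _ = |u x| ^ p := by rw [hone, mul_one]
  rw [hLHS] at key
  refine key.trans ?_
  -- pointwise Picone inequality on Ω
  have hpt : ∀ x ∈ Ω, ‖gradX X v x‖ ^ (p - 2) * ⟪gradX X v x, gradX X φ x⟫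
      ≤ ‖gradX X u x‖ ^ p := by
    intro x hx
    have hvx : 0 < v x := hvpos x hx
    have hud : HasFDerivAt u (fderiv ℝ u x) x :=
      ((hu.differentiable (by simp)) x).hasFDerivAt
    have hvd : HasFDerivAt v (fderiv ℝ v x) x :=
      (((hv.contDiffAt (hΩ.mem_nhds hx)).differentiableAt one_ne_zero)).hasFDerivAt
    have h1 : HasFDerivAt (fun y => |u y| ^ p)
        ((p * |u x| ^ (p - 2) * u x) • fderiv ℝ u x) x :=
      (hasDerivAt_abs_rpow (u x) hp).comp_hasFDerivAt x hud
    have h2 : HasFDerivAt (fun y => (v y) ^ (1 - p))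
        (((1 - p) * (v x) ^ (1 - p - 1)) • fderiv ℝ v x) x :=
      (Real.hasDerivAt_rpow_const (Or.inl (ne_of_gt hvx))).comp_hasFDerivAt x hvd
    rw [show (1 - p - 1 : ℝ) = -p by ring] at h2
    have hm := h1.mul h2
    have hφd : HasFDerivAt φ
        ((|u x| ^ p) • (((1 - p) * (v x) ^ (-p)) • fderiv ℝ v x)
          + ((v x) ^ (1 - p)) • ((p * |u x| ^ (p - 2) * u x) • fderiv ℝ u x)) x :=
      hm.congr_of_eventuallyEq (hφeq x hx)
    have hvec : gradX X φ x
        = (|u x| ^ p * ((1 - p) * (v x) ^ (-p))) • gradX X v x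
          + ((v x) ^ (1 - p) * (p * |u x| ^ (p - 2) * u x)) • gradX X u x := by
      ext k
      have hD := hφd.fderiv
      simp only [gradX_apply, hD, ContinuousLinearMap.add_apply,
        ContinuousLinearMap.coe_smul', Pi.smul_apply, PiLp.add_apply, PiLp.smul_apply,
        smul_eq_mul]
      ring
    have hinner : ⟪gradX X v x, gradX X φ x⟫
        = (|u x| ^ p * ((1 - p) * (v x) ^ (-p))) * (‖gradX X v x‖ * ‖gradX X v x‖)
          + ((v x) ^ (1 - p) * (p * |u x| ^ (p - 2) * u x)) * ⟪gradX X v x, gradX X u x⟫ := by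
      rw [hvec, inner_add_right, real_inner_smul_right, real_inner_smul_right,
        real_inner_self_eq_norm_mul_norm]
    rw [hinner]
    have hring : (|u x| ^ p * ((1 - p) * (v x) ^ (-p))) * (‖gradX X v x‖ * ‖gradX X v x‖)
          + ((v x) ^ (1 - p) * (p * |u x| ^ (p - 2) * u x)) * ⟪gradX X v x, gradX X u x⟫
        = (1 - p) * |u x| ^ p * (v x) ^ (-p) * (‖gradX X v x‖ * ‖gradX X v x‖)
          + p * |u x| ^ (p - 2) * u x * (v x) ^ (1 - p) * ⟪gradX X v x, gradX X u x⟫ := by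
      ring
    rw [hring]
    exact key_scalar hp (norm_nonneg _) (norm_nonneg _) hvx
      (abs_real_inner_le_norm _ _)
  -- integrability of ‖∇_X u‖^p on Ω
  have hfint : IntegrableOn (fun x => ‖gradX X u x‖ ^ p) Ω := by
    have hfd : Continuous (fderiv ℝ u) := hu.continuous_fderiv (by simp)
    have hcomp : ∀ k : Fin N, ContinuousOn (fun x => gradX X u x k) Ω := by
      intro k
      have : ContinuousOn (fun x => (fderiv ℝ u x) (X k x)) Ω :=
        hfd.continuousOn.clm_apply (hX k)
      simpa only [gradX_apply] using this
    have hnorm : ContinuousOn (fun x => ‖gradX X u x‖) Ω := by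
      have hsum : ContinuousOn (fun x => Real.sqrt (∑ k, (gradX X u x k) ^ 2)) Ω :=
        Real.continuous_sqrt.comp_continuousOn
          (continuousOn_finset_sum _ fun k _ => ((hcomp k).mul (hcomp k)).congr
            (fun x _ => by simp only [Pi.mul_apply]; ring))
      refine hsum.congr fun x _ => ?_
      rw [EuclideanSpace.norm_eq]
      congr 1
      refine Finset.sum_congr rfl fun k _ => ?_
      rw [Real.norm_eq_abs, sq_abs]
    have hfC : ContinuousOn (fun x => ‖gradX X u x‖ ^ p) Ω :=
      hnorm.rpow_const fun x _ => Or.inr hp0.le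
    have hzero : ∀ x, x ∉ tsupport u → ‖gradX X u x‖ ^ p = 0 := by
      intro x hx
      have hev : u =ᶠ[nhds x] fun _ => (0:ℝ) :=
        Filter.eventuallyEq_of_mem ((isClosed_tsupport u).isOpen_compl.mem_nhds hx)
          (fun y hy => image_eq_zero_of_notMem_tsupport hy)
      have hfz : fderiv ℝ u x = 0 := by
        rw [hev.fderiv_eq]; exact fderiv_const_apply 0
      have hg0 : gradX X u x = 0 := by
        ext k
        rw [gradX_apply, hfz]
        simp
      rw [hg0, norm_zero, Real.zero_rpow hpne]
    have h1 : IntegrableOn (fun x => ‖gradX X u x‖ ^ p) (tsupport u) :=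
      (hfC.mono husupp).integrableOn_compact hucomp
    have h2 : IntegrableOn (fun x => ‖gradX X u x‖ ^ p) (Ω \ tsupport u) := by
      have : IntegrableOn (fun _ => (0:ℝ)) (Ω \ tsupport u) := integrableOn_zero
      exact this.congr_fun (fun x hx => (hzero x hx.2).symm)
        (hΩ.measurableSet.diff (isClosed_tsupport u).measurableSet)
    refine (h1.union h2).mono_set fun x hx => ?_
    by_cases hxK : x ∈ tsupport u
    · exact Or.inl hxK
    · exact Or.inr ⟨hx, hxK⟩
  by_cases hG : IntegrableOn
      (fun x => ‖gradX X v x‖ ^ (p - 2) * ⟪gradX X v x, gradX X φ x⟫) Ω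
  · exact setIntegral_mono_on hG hfint hΩ.measurableSet hpt
  · rw [integral_undef hG]
    exact setIntegral_nonneg hΩ.measurableSet fun x _ => Real.rpow_nonneg (norm_nonneg _) p
end
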